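/- Let n ≥ 2 and let A(1), …, A(n−1) be nonnegative n×n matrices, each column-stochastic with all diagonal entries positive, and each irreducible (i.e., the directed graph on [n] with an edge from j to i whenever the (i,j) entry is positive is strongly connected). Then the product A(n−1)A(n−2)⋯A(1) has all entries strictly positive. -/
import Mathlib


open Finset MeasureTheory

/-- `A_{S S̄} = ∑_{i ∈ S, j ∉ S} A i j`. -/
def flowSum {n : ℕ} (A : Matrix (Fin n) (Fin n) ℝ) (S : Finset (Fin n)) : ℝ :=
  ∑ i ∈ S, ∑ j ∈ Sᶜ, A i j

/-- `S` is a nontrivial subset of `[n]`. -/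
def NontrivialSubset {n : ℕ} (S : Finset (Fin n)) : Prop :=
  S.Nonempty ∧ S ≠ Finset.univ

/-- Directed infinite flow property: for every nontrivial `S`, `∑_t A_{S S̄}(t) = ∞`. -/
def DirectedInfiniteFlow {n : ℕ} (A : ℕ → Matrix (Fin n) (Fin n) ℝ) : Prop :=
  ∀ S : Finset (Fin n), NontrivialSubset S →
    Filter.Tendsto (fun T => ∑ t ∈ Finset.range T, flowSum (A t) S)
      Filter.atTop Filter.atTop

/-- The backward product `A(t:s) = A(t) A(t-1) ⋯ A(s)`. -/
def matProd {n : ℕ} (A : ℕ → Matrix (Fin n) (Fin n) ℝ) (t s : ℕ) :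
    Matrix (Fin n) (Fin n) ℝ :=
  (((List.range (t + 1 - s)).map fun k => A (t - k))).prod

/-- Row-stochastic nonnegative matrix. -/
def RowStochastic {n : ℕ} (A : Matrix (Fin n) (Fin n) ℝ) : Prop :=
  (∀ i j, 0 ≤ A i j) ∧ ∀ i, ∑ j, A i j = 1

/-- Column-stochastic nonnegative matrix. -/
def ColStochastic {n : ℕ} (A : Matrix (Fin n) (Fin n) ℝ) : Prop :=
  (∀ i j, 0 ≤ A i j) ∧ ∀ j, ∑ i, A i j = 1

/-- `W` is the degree-normalized adjacency matrix of a digraph with all self-loops: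
`W i j = 1 / (out-degree of j)` if there is an edge from `j` to `i`, else `0`. -/
def OutDegreeForm {n : ℕ} (W : Matrix (Fin n) (Fin n) ℝ) : Prop :=
  ∃ N : Fin n → Finset (Fin n), (∀ j, j ∈ N j) ∧
    ∀ i j, W i j = if i ∈ N j then (1 : ℝ) / (N j).card else 0

/-- Strong aperiodicity of a sequence of matrices. -/
def StronglyAperiodic {n : ℕ} (A : ℕ → Matrix (Fin n) (Fin n) ℝ) : Prop :=
  ∃ γ : ℝ, 0 < γ ∧ ∀ t i, γ ≤ A t i i

/-- The times `k_q`: `k_0 = 0` and `k_q` is the least `t' > k_{q-1}` with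
nonzero flow `∑_{t=k_{q-1}}^{t'-1} A_{S S̄}(t) > 0` across every nontrivial cut. -/
noncomputable def kSeq {n : ℕ} (A : ℕ → Matrix (Fin n) (Fin n) ℝ) : ℕ → ℕ
  | 0 => 0
  | q + 1 => sInf {t' : ℕ | kSeq A q < t' ∧ ∀ S : Finset (Fin n), NontrivialSubset S →
      0 < ∑ t ∈ Finset.Ico (kSeq A q) t', flowSum (A t) S}

/-- `ℓ_q = k_{qn} - k_{(q-1)n}`. -/
noncomputable def ellSeq {n : ℕ} (A : ℕ → Matrix (Fin n) (Fin n) ℝ) (q : ℕ) : ℕ :=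
  kSeq A (q * n) - kSeq A ((q - 1) * n)

/-- The index set `Q_{t,s} = {q ≥ 1 : s ≤ k_{(q-1)n}, k_{qn} ≤ t}` (as a `Finset`). -/
noncomputable def QSet {n : ℕ} (A : ℕ → Matrix (Fin n) (Fin n) ℝ) (t s : ℕ) :
    Finset ℕ :=
  (Finset.Icc 1 t).filter fun q => s ≤ kSeq A ((q - 1) * n) ∧ kSeq A (q * n) ≤ t

/-- `Λ_{t,s} = ∏_{q ∈ Q_{t,s}} (1 - 1/n^{ℓ_q})`. -/
noncomputable def Lam {n : ℕ} (A : ℕ → Matrix (Fin n) (Fin n) ℝ) (t s : ℕ) : ℝ :=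
  ∏ q ∈ QSet A t s, (1 - 1 / (n : ℝ) ^ (ellSeq A q))

/-- Push-sum iterates: `u(0) = u0`, `u(t+1) = W(t) u(t)`. -/
def pushIter {n : ℕ} (W : ℕ → Matrix (Fin n) (Fin n) ℝ) (u0 : Fin n → ℝ) : ℕ → Fin n → ℝ
  | 0 => u0
  | t + 1 => (W t).mulVec (pushIter W u0 t)

/-- A nonnegative matrix is irreducible if the digraph with an edge from `j` to `i`
whenever `A i j > 0` is strongly connected. -/
def IrreducibleMat {n : ℕ} (A : Matrix (Fin n) (Fin n) ℝ) : Prop :=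
  ∀ i j : Fin n, Relation.ReflTransGen (fun a b => 0 < A b a) i j


lemma cross_edge {α} {r : α → α → Prop} {S : Finset α} :
    ∀ {x y}, Relation.ReflTransGen r x y → x ∈ S → y ∉ S →
      ∃ a ∈ S, ∃ c, c ∉ S ∧ r a c := by
  intro x y h
  induction h with
  | refl => intro hx hy; exact absurd hx hy
  | @tail b c h' hr ih =>
    intro hx hy
    by_cases hb : b ∈ S
    · exact ⟨b, hb, c, hy, hr⟩
    · exact ih hx hb

lemma prod_range_succ_mat {n m : ℕ} (A : ℕ → Matrix (Fin n) (Fin n) ℝ) :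
    ((List.range (m+1)).map fun k => A (m+1-k)).prod =
      A (m+1) * ((List.range m).map fun k => A (m-k)).prod := by
  rw [List.range_succ_eq_map]
  simp [List.map_map, Function.comp, Nat.succ_sub_succ]
  congr 1
  apply congrArg
  apply List.map_congr_left
  intro k _
  simp [Nat.succ_sub_succ]


/-- The product `A(n-1) A(n-2) ⋯ A(1)` of `n-1` irreducible
column-stochastic matrices with positive diagonals is entrywise positive. -/
theorem product_of_irreducible_positive {n : ℕ} (hn : 2 ≤ n)
    (A : ℕ → Matrix (Fin n) (Fin n) ℝ)
    (hCS : ∀ i, 1 ≤ i → i ≤ n - 1 → ColStochastic (A i))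
    (hdiag : ∀ i, 1 ≤ i → i ≤ n - 1 → ∀ a, 0 < A i a a)
    (hirr : ∀ i, 1 ≤ i → i ≤ n - 1 → IrreducibleMat (A i)) :
    ∀ a b : Fin n,
      0 < (((List.range (n - 1)).map fun k => A (n - 1 - k)).prod) a b := by
  
  classical
  set P : ℕ → Matrix (Fin n) (Fin n) ℝ :=
    fun m => ((List.range m).map fun k => A (m - k)).prod with hP
  have key : ∀ m, m ≤ n - 1 → (∀ a b, 0 ≤ P m a b) ∧
      ∀ b, m + 1 ≤ (Finset.univ.filter fun a => 0 < P m a b).card := by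
    intro m
    induction m with
    | zero =>
      intro _
      constructor
      · intro a b
        simp only [hP, List.range_zero, List.map_nil, List.prod_nil, Matrix.one_apply]
        split <;> norm_num
      · intro b
        have heq : (Finset.univ.filter fun a => 0 < P 0 a b) = {b} := by
          ext a
          simp only [hP, List.range_zero, List.map_nil, List.prod_nil, Matrix.one_apply,
            Finset.mem_filter, Finset.mem_univ, true_and, Finset.mem_singleton]
          constructor
          · intro h; by_contra hab; simp [hab] at h
          · intro h; simp [h]
        rw [heq]; simp
    | succ m ih =>
      intro hm
      have hm' : m ≤ n - 1 := by omega
      obtain ⟨ihnn, ihcard⟩ := ih hm'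
      have h1 : 1 ≤ m + 1 := by omega
      have hCSm := hCS (m+1) h1 hm
      have hstep : P (m+1) = A (m+1) * P m := prod_range_succ_mat A
      have hnn : ∀ a b, 0 ≤ P (m+1) a b := by
        intro a b
        rw [hstep, Matrix.mul_apply]
        exact Finset.sum_nonneg fun c _ => mul_nonneg (hCSm.1 a c) (ihnn c b)
      refine ⟨hnn, fun b => ?_⟩
      set S : Finset (Fin n) := Finset.univ.filter (fun a => 0 < P m a b) with hS
      set S' : Finset (Fin n) := Finset.univ.filter (fun a => 0 < P (m+1) a b) with hS'
      have hmemS : ∀ a, a ∈ S ↔ 0 < P m a b := by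
        intro a; simp [hS]
      have hmemS' : ∀ a, a ∈ S' ↔ 0 < P (m+1) a b := by
        intro a; simp [hS']
      have hsub : S ⊆ S' := by
        intro a ha
        rw [hmemS] at ha
        rw [hmemS', hstep, Matrix.mul_apply]
        apply Finset.sum_pos' (fun c _ => mul_nonneg (hCSm.1 a c) (ihnn c b))
        exact ⟨a, Finset.mem_univ a, mul_pos (hdiag (m+1) h1 hm a) ha⟩
      by_cases huniv : S = Finset.univ
      · have hS'univ : S' = Finset.univ :=
          Finset.univ_subset_iff.mp (huniv ▸ hsub)
        rw [hS'univ, Finset.card_univ, Fintype.card_fin]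
        omega
      · have hcb := ihcard b
        rw [← hS] at hcb
        have hSne : S.Nonempty := Finset.card_pos.mp (by omega)
        obtain ⟨c0, hc0⟩ : ∃ c0, c0 ∉ S := by
          by_contra h
          push_neg at h
          exact huniv (Finset.eq_univ_iff_forall.mpr h)
        obtain ⟨a0, ha0⟩ := hSne
        obtain ⟨a, haS, c, hcS, hac⟩ :=
          cross_edge (r := fun x y => 0 < A (m+1) y x) (S := S)
            (hirr (m+1) h1 hm a0 c0) ha0 hc0
        have hcS' : c ∈ S' := by
          rw [hmemS', hstep, Matrix.mul_apply]
          apply Finset.sum_pos' (fun d _ => mul_nonneg (hCSm.1 c d) (ihnn d b))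
          exact ⟨a, Finset.mem_univ a, mul_pos hac ((hmemS a).mp haS)⟩
        have hins : insert c S ⊆ S' := by
          intro x hx
          rcases Finset.mem_insert.mp hx with h | h
          · exact h ▸ hcS'
          · exact hsub h
        calc m + 1 + 1 ≤ S.card + 1 := by omega
          _ = (insert c S).card := (Finset.card_insert_of_notMem hcS).symm
          _ ≤ S'.card := Finset.card_le_card hins
  intro a b
  obtain ⟨hnn, hcard⟩ := key (n-1) le_rfl
  have hcard' := hcard b
  have huniv : (Finset.univ.filter fun x => 0 < P (n-1) x b) = Finset.univ := by
    apply Finset.eq_univ_of_card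
    have hle : (Finset.univ.filter fun x => 0 < P (n-1) x b).card ≤ n := by
      calc _ ≤ (Finset.univ : Finset (Fin n)).card := Finset.card_le_card (Finset.filter_subset _ _)
        _ = n := by simp
    have : n - 1 + 1 = n := by omega
    simp only [Fintype.card_fin]
    omega
  have := Finset.mem_filter.mp (huniv ▸ Finset.mem_univ a)
  exact this.2
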